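/- arXiv:1310.2267 — 2 statements merged into one kernel-verified Lean document; each statement's English description precedes it below -/
import Mathlib

section
/- If x ∈ C^d is a unit vector and a is drawn uniformly from a t-design (t ≥ 1), then for every γ ≤ 1 and δ ≥ 1, Pr[|⟨a,x⟩|^2 ≥ (δ+1)·t·d^{−γ}] ≤ δ^{−t} d^{−t(1−γ)}. In particular, taking δ = 4, Pr[|⟨a,x⟩|^2 ≥ 5t·d^{−γ}] ≤ 4^{−t} d^{−t(1−γ)}. -/
open Matrix BigOperators Finset

/-- The permutation operator `σ_π` on `(ℂ^d)^{⊗k}`. -/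
noncomputable def permM (d k : ℕ) (σ : Equiv.Perm (Fin k)) :
    Matrix (Fin k → Fin d) (Fin k → Fin d) ℂ :=
  Matrix.of fun f g => if f = g ∘ σ then 1 else 0

/-- The symmetrizer `P_{Sym^k} = (1/k!) Σ_{π ∈ S_k} σ_π` on `(ℂ^d)^{⊗k}`. -/
noncomputable def psym (d k : ℕ) : Matrix (Fin k → Fin d) (Fin k → Fin d) ℂ :=
  (k.factorial : ℂ)⁻¹ • ∑ σ : Equiv.Perm (Fin k), permM d k σ

/-- The `k`-fold tensor power `(x x*)^{⊗k}` of the rank-one projector `x x*`. -/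
noncomputable def tensPow {d : ℕ} (x : Fin d → ℂ) (k : ℕ) :
    Matrix (Fin k → Fin d) (Fin k → Fin d) ℂ :=
  Matrix.of fun f g => (∏ j, x (f j)) * ∏ j, (starRingEnd ℂ) (x (g j))

/-- `t`-design. -/
def IsTDesign {d N : ℕ} (w : Fin N → Fin d → ℂ) (t : ℕ) : Prop :=
  (∀ i, ∑ j, ‖w i j‖ ^ 2 = 1) ∧
  (N : ℂ)⁻¹ • ∑ i, tensPow (w i) t = ((d + t - 1).choose t : ℂ)⁻¹ • psym d t

-- quadratic form computation for tensPow
lemma quadA {d t : ℕ} (a x : Fin d → ℂ) :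
    ∑ f : Fin t → Fin d, ∑ g : Fin t → Fin d,
      (∏ j, (starRingEnd ℂ) (x (f j))) * tensPow a t f g *
        (starRingEnd ℂ) (∏ j, (starRingEnd ℂ) (x (g j)))
      = ((‖∑ j, (starRingEnd ℂ) (a j) * x j‖ ^ 2 : ℝ) : ℂ) ^ t := by
  have : ∑ f : Fin t → Fin d, ∑ g : Fin t → Fin d,
      (∏ j, (starRingEnd ℂ) (x (f j))) * tensPow a t f g *
        (starRingEnd ℂ) (∏ j, (starRingEnd ℂ) (x (g j)))
      = (∑ f : Fin t → Fin d, ∏ j, ((starRingEnd ℂ) (x (f j)) * a (f j))) *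
        (∑ g : Fin t → Fin d, ∏ j, ((starRingEnd ℂ) (a (g j)) * x (g j))) := by
    rw [Finset.sum_mul_sum]
    refine Finset.sum_congr rfl fun f _ => Finset.sum_congr rfl fun g _ => ?_
    simp only [tensPow, Matrix.of_apply, map_prod, RingHomCompTriple.comp_apply, RingHom.id_apply,
      Finset.prod_mul_distrib]
    ring
  have e1 : (∑ f : Fin t → Fin d, ∏ j, ((starRingEnd ℂ) (x (f j)) * a (f j)))
      = (∑ j, (starRingEnd ℂ) (x j) * a j) ^ t := (Fintype.sum_pow (fun k => (starRingEnd ℂ) (x k) * a k) t).symm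
  have e2 : (∑ g : Fin t → Fin d, ∏ j, ((starRingEnd ℂ) (a (g j)) * x (g j)))
      = (∑ j, (starRingEnd ℂ) (a j) * x j) ^ t := (Fintype.sum_pow (fun k => (starRingEnd ℂ) (a k) * x k) t).symm
  rw [this, e1, e2]
  have h1 : (∑ j, (starRingEnd ℂ) (x j) * a j) = (starRingEnd ℂ) (∑ j, (starRingEnd ℂ) (a j) * x j) := by
    simp [map_sum, mul_comm]
  rw [h1]
  set s := ∑ j, (starRingEnd ℂ) (a j) * x j
  rw [← map_pow, Complex.conj_mul', norm_pow]
  push_cast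
  ring

lemma quadB {d t : ℕ} (x : Fin d → ℂ) (hx : ∑ j, ‖x j‖ ^ 2 = 1) :
    ∑ f : Fin t → Fin d, ∑ g : Fin t → Fin d,
      (∏ j, (starRingEnd ℂ) (x (f j))) * psym d t f g *
        (starRingEnd ℂ) (∏ j, (starRingEnd ℂ) (x (g j)))
      = 1 := by
  have key : ∀ σ : Equiv.Perm (Fin t),
      ∑ f : Fin t → Fin d, ∑ g : Fin t → Fin d,
        (∏ j, (starRingEnd ℂ) (x (f j))) * permM d t σ f g *
          (starRingEnd ℂ) (∏ j, (starRingEnd ℂ) (x (g j))) = 1 := by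
    intro σ
    have hrow : ∀ g : Fin t → Fin d,
        ∑ f : Fin t → Fin d, (∏ j, (starRingEnd ℂ) (x (f j))) * permM d t σ f g *
          (starRingEnd ℂ) (∏ j, (starRingEnd ℂ) (x (g j)))
        = ∏ j, ((starRingEnd ℂ) (x (g j)) * x (g j)) := by
      intro g
      rw [Finset.sum_eq_single (g ∘ σ)]
      · have e : (∏ j, (starRingEnd ℂ) (x ((g ∘ σ) j))) = ∏ j, (starRingEnd ℂ) (x (g j)) :=
          Equiv.prod_comp σ fun j => (starRingEnd ℂ) (x (g j))
        simp only [permM, Matrix.of_apply, if_pos rfl, map_prod, RingHomCompTriple.comp_apply,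
          RingHom.id_apply, mul_one, if_true, e]
        rw [← Finset.prod_mul_distrib]
      · intro f _ hf
        simp [permM, hf]
      · simp
    rw [Finset.sum_comm]
    simp only [hrow]
    have h1 : (∑ j, ((starRingEnd ℂ) (x j) * x j)) = 1 := by
      have e : ∀ j, (starRingEnd ℂ) (x j) * x j = ((‖x j‖ ^ 2 : ℝ) : ℂ) := by
        intro j; rw [Complex.conj_mul']; push_cast; ring
      simp only [e]
      rw [← Complex.ofReal_sum, hx]; norm_num
    calc ∑ g : Fin t → Fin d, ∏ j, ((starRingEnd ℂ) (x (g j)) * x (g j))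
        = (∑ j, ((starRingEnd ℂ) (x j) * x j)) ^ t :=
          (Fintype.sum_pow (fun k => (starRingEnd ℂ) (x k) * x k) t).symm
      _ = 1 := by rw [h1, one_pow]
  have hfac : ((t.factorial : ℂ))⁻¹ * (t.factorial : ℂ) = 1 := by
    rw [inv_mul_cancel₀]
    exact_mod_cast t.factorial_ne_zero
  calc ∑ f : Fin t → Fin d, ∑ g : Fin t → Fin d,
        (∏ j, (starRingEnd ℂ) (x (f j))) * psym d t f g *
          (starRingEnd ℂ) (∏ j, (starRingEnd ℂ) (x (g j)))
      = ∑ f : Fin t → Fin d, ∑ g : Fin t → Fin d, ∑ σ : Equiv.Perm (Fin t),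
          (t.factorial : ℂ)⁻¹ * ((∏ j, (starRingEnd ℂ) (x (f j))) * permM d t σ f g *
            (starRingEnd ℂ) (∏ j, (starRingEnd ℂ) (x (g j)))) := by
        refine Finset.sum_congr rfl fun f _ => Finset.sum_congr rfl fun g _ => ?_
        simp only [psym, Matrix.smul_apply, Matrix.sum_apply, smul_eq_mul]
        rw [Finset.mul_sum, Finset.mul_sum, Finset.sum_mul]
        exact Finset.sum_congr rfl fun σ _ => by ring
    _ = ∑ σ : Equiv.Perm (Fin t), ∑ f : Fin t → Fin d, ∑ g : Fin t → Fin d,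
          (t.factorial : ℂ)⁻¹ * ((∏ j, (starRingEnd ℂ) (x (f j))) * permM d t σ f g *
            (starRingEnd ℂ) (∏ j, (starRingEnd ℂ) (x (g j)))) :=
        (Finset.sum_congr rfl fun f _ => Finset.sum_comm).trans Finset.sum_comm
    _ = ∑ σ : Equiv.Perm (Fin t), (t.factorial : ℂ)⁻¹ * ∑ f : Fin t → Fin d, ∑ g : Fin t → Fin d,
          ((∏ j, (starRingEnd ℂ) (x (f j))) * permM d t σ f g *
            (starRingEnd ℂ) (∏ j, (starRingEnd ℂ) (x (g j)))) := by
        simp only [Finset.mul_sum]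
    _ = ∑ _σ : Equiv.Perm (Fin t), (t.factorial : ℂ)⁻¹ * 1 := by
        refine Finset.sum_congr rfl fun σ _ => ?_
        rw [key σ]
    _ = 1 := by
        rw [Finset.sum_const, Finset.card_univ, Fintype.card_perm, Fintype.card_fin,
          nsmul_eq_mul, mul_one, mul_comm]
        exact hfac

lemma moment_sum {d N t : ℕ} (hd : 0 < d) (hN : 0 < N)
    (w : Fin N → Fin d → ℂ) (hw : IsTDesign w t)
    (x : Fin d → ℂ) (hx : ∑ j, ‖x j‖ ^ 2 = 1) :
    ∑ i, (‖∑ j, (starRingEnd ℂ) (w i j) * x j‖ ^ 2) ^ t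
      = (N : ℝ) / ((d + t - 1).choose t : ℝ) := by
  have hC : 0 < (d + t - 1).choose t := Nat.choose_pos (by omega)
  have h := congrArg (fun M : Matrix (Fin t → Fin d) (Fin t → Fin d) ℂ =>
    ∑ f, ∑ g, (∏ j, (starRingEnd ℂ) (x (f j))) * M f g *
      (starRingEnd ℂ) (∏ j, (starRingEnd ℂ) (x (g j)))) hw.2
  simp only [Matrix.smul_apply, Matrix.sum_apply, smul_eq_mul] at h
  have hL : ∑ f : Fin t → Fin d, ∑ g : Fin t → Fin d,
      (∏ j, (starRingEnd ℂ) (x (f j))) * ((N : ℂ)⁻¹ * ∑ i, tensPow (w i) t f g) *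
        (starRingEnd ℂ) (∏ j, (starRingEnd ℂ) (x (g j)))
      = (N : ℂ)⁻¹ * ∑ i, ((‖∑ j, (starRingEnd ℂ) (w i j) * x j‖ ^ 2 : ℝ) : ℂ) ^ t := by
    calc ∑ f : Fin t → Fin d, ∑ g : Fin t → Fin d,
        (∏ j, (starRingEnd ℂ) (x (f j))) * ((N : ℂ)⁻¹ * ∑ i, tensPow (w i) t f g) *
          (starRingEnd ℂ) (∏ j, (starRingEnd ℂ) (x (g j)))
        = ∑ f : Fin t → Fin d, ∑ g : Fin t → Fin d, ∑ i,
            (N : ℂ)⁻¹ * ((∏ j, (starRingEnd ℂ) (x (f j))) * tensPow (w i) t f g *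
              (starRingEnd ℂ) (∏ j, (starRingEnd ℂ) (x (g j)))) := by
          refine Finset.sum_congr rfl fun f _ => Finset.sum_congr rfl fun g _ => ?_
          rw [Finset.mul_sum, Finset.mul_sum, Finset.sum_mul]
          exact Finset.sum_congr rfl fun i _ => by ring
      _ = ∑ i, ∑ f : Fin t → Fin d, ∑ g : Fin t → Fin d,
            (N : ℂ)⁻¹ * ((∏ j, (starRingEnd ℂ) (x (f j))) * tensPow (w i) t f g *
              (starRingEnd ℂ) (∏ j, (starRingEnd ℂ) (x (g j)))) :=
          (Finset.sum_congr rfl fun f _ => Finset.sum_comm).trans Finset.sum_comm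
      _ = (N : ℂ)⁻¹ * ∑ i, ((‖∑ j, (starRingEnd ℂ) (w i j) * x j‖ ^ 2 : ℝ) : ℂ) ^ t := by
          simp only [← Finset.mul_sum]
          congr 1
          exact Finset.sum_congr rfl fun i _ => quadA (w i) x
  have hR : ∑ f : Fin t → Fin d, ∑ g : Fin t → Fin d,
      (∏ j, (starRingEnd ℂ) (x (f j))) * (((d + t - 1).choose t : ℂ)⁻¹ * psym d t f g) *
        (starRingEnd ℂ) (∏ j, (starRingEnd ℂ) (x (g j)))
      = ((d + t - 1).choose t : ℂ)⁻¹ := by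
    have e : ∑ f : Fin t → Fin d, ∑ g : Fin t → Fin d,
        (∏ j, (starRingEnd ℂ) (x (f j))) * (((d + t - 1).choose t : ℂ)⁻¹ * psym d t f g) *
          (starRingEnd ℂ) (∏ j, (starRingEnd ℂ) (x (g j)))
        = ((d + t - 1).choose t : ℂ)⁻¹ * ∑ f : Fin t → Fin d, ∑ g : Fin t → Fin d,
            (∏ j, (starRingEnd ℂ) (x (f j))) * psym d t f g *
              (starRingEnd ℂ) (∏ j, (starRingEnd ℂ) (x (g j))) := by
      simp only [Finset.mul_sum]
      exact Finset.sum_congr rfl fun f _ => Finset.sum_congr rfl fun g _ => by ring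
    rw [e, quadB x hx, mul_one]
  have h2 := hL.symm.trans (h.trans hR)
  have hNne : (N : ℂ) ≠ 0 := by exact_mod_cast hN.ne'
  have hCne : ((d + t - 1).choose t : ℂ) ≠ 0 := by exact_mod_cast hC.ne'
  have hcast : ∑ i, ((‖∑ j, (starRingEnd ℂ) (w i j) * x j‖ ^ 2 : ℝ) : ℂ) ^ t
      = ((∑ i, (‖∑ j, (starRingEnd ℂ) (w i j) * x j‖ ^ 2) ^ t : ℝ) : ℂ) := by
    norm_cast
  rw [hcast] at h2
  have h3 : ((∑ i, (‖∑ j, (starRingEnd ℂ) (w i j) * x j‖ ^ 2) ^ t : ℝ) : ℂ)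
      = ((N : ℝ) / ((d + t - 1).choose t : ℝ) : ℝ) := by
    rw [inv_mul_eq_iff_eq_mul₀ hNne] at h2
    rw [h2]
    push_cast
    ring
  exact_mod_cast h3

lemma tail_bound {d N t : ℕ} (hd : 0 < d) (hN : 0 < N) (ht : 1 ≤ t)
    (w : Fin N → Fin d → ℂ) (hw : IsTDesign w t)
    (x : Fin d → ℂ) (hx : ∑ j, ‖x j‖ ^ 2 = 1)
    (γ : ℝ) (hγ : γ ≤ 1) (δ : ℝ) (hδ : 1 ≤ δ) :
    ((univ.filter fun i =>
        (δ + 1) * t * (d : ℝ) ^ (-γ) ≤ ‖∑ j, (starRingEnd ℂ) (w i j) * x j‖ ^ 2).card : ℝ) / N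
      ≤ δ⁻¹ ^ t * (d : ℝ) ^ (-(t : ℝ) * (1 - γ)) := by
  set C : ℕ := (d + t - 1).choose t with hCdef
  have hC : 0 < C := Nat.choose_pos (by omega)
  have hd1 : (1 : ℝ) ≤ (d : ℝ) := by exact_mod_cast hd
  have hdpos : (0 : ℝ) < (d : ℝ) := by positivity
  have ht1 : (1 : ℝ) ≤ (t : ℝ) := by exact_mod_cast ht
  set τ : ℝ := (δ + 1) * t * (d : ℝ) ^ (-γ) with hτdef
  have hrp : (0 : ℝ) < (d : ℝ) ^ (-γ) := Real.rpow_pos_of_pos hdpos _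
  have hτ : 0 < τ := by
    apply mul_pos (mul_pos (by linarith) (by linarith)) hrp
  set s : Fin N → ℝ := fun i => ‖∑ j, (starRingEnd ℂ) (w i j) * x j‖ ^ 2 with hsdef
  have hs0 : ∀ i, 0 ≤ s i := fun i => by positivity
  set F := univ.filter fun i => τ ≤ s i with hF
  -- Markov
  have markov : (F.card : ℝ) * τ ^ t ≤ (N : ℝ) / (C : ℝ) := by
    have h1 : (F.card : ℝ) * τ ^ t ≤ ∑ i ∈ F, (s i) ^ t := by
      calc (F.card : ℝ) * τ ^ t = ∑ _i ∈ F, τ ^ t := by rw [Finset.sum_const, nsmul_eq_mul]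
        _ ≤ ∑ i ∈ F, s i ^ t := Finset.sum_le_sum fun i hi =>
            pow_le_pow_left₀ hτ.le (Finset.mem_filter.mp hi).2 t
    have h2 : ∑ i ∈ F, (s i) ^ t ≤ ∑ i, (s i) ^ t :=
      Finset.sum_le_sum_of_subset_of_nonneg (Finset.subset_univ F)
        (fun i _ _ => pow_nonneg (hs0 i) t)
    have h3 : ∑ i, (s i) ^ t = (N : ℝ) / (C : ℝ) := moment_sum hd hN w hw x hx
    linarith
  -- key real inequality: δ^t * d^(t(1-γ)) ≤ C * τ^t
  have hnat : (d : ℝ) ^ t ≤ (C : ℝ) * (t : ℝ) ^ t := by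
    have h1 : d ^ t ≤ t.factorial * C := by
      rw [hCdef, ← Nat.ascFactorial_eq_factorial_mul_choose']
      exact Nat.pow_succ_le_ascFactorial d t
    have h2 : t.factorial * C ≤ t ^ t * C :=
      Nat.mul_le_mul_right _ (Nat.factorial_le_pow t)
    calc (d : ℝ) ^ t ≤ ((t ^ t * C : ℕ) : ℝ) := by exact_mod_cast h1.trans h2
      _ = (C : ℝ) * (t : ℝ) ^ t := by push_cast; ring
  have hkey : δ ^ t * (d : ℝ) ^ ((t : ℝ) * (1 - γ)) ≤ (C : ℝ) * τ ^ t := by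
    have e1 : (C : ℝ) * τ ^ t = ((C : ℝ) * (t : ℝ) ^ t) * ((δ + 1) ^ t * ((d : ℝ) ^ (-γ)) ^ t) := by
      rw [hτdef, mul_pow, mul_pow]; ring
    have e2 : (d : ℝ) ^ ((t : ℝ) * (1 - γ)) = (d : ℝ) ^ t * ((d : ℝ) ^ (-γ)) ^ t := by
      rw [← Real.rpow_natCast ((d : ℝ) ^ (-γ)) t, ← Real.rpow_natCast (d : ℝ) t,
        ← Real.rpow_mul hdpos.le, ← Real.rpow_add hdpos]
      ring_nf
    rw [e1, e2]
    have hδt : δ ^ t ≤ (δ + 1) ^ t := pow_le_pow_left₀ (by linarith) (by linarith) t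
    calc δ ^ t * ((d : ℝ) ^ t * ((d : ℝ) ^ (-γ)) ^ t)
        ≤ (δ + 1) ^ t * (((C : ℝ) * (t : ℝ) ^ t) * ((d : ℝ) ^ (-γ)) ^ t) := by
          apply mul_le_mul hδt ?_ (by positivity) (by positivity)
          apply mul_le_mul_of_nonneg_right hnat (by positivity)
      _ = ((C : ℝ) * (t : ℝ) ^ t) * ((δ + 1) ^ t * ((d : ℝ) ^ (-γ)) ^ t) := by ring
  -- conclude
  have hCpos : (0 : ℝ) < (C : ℝ) := by exact_mod_cast hC
  have hτt : (0 : ℝ) < τ ^ t := pow_pos hτ t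
  have hrpow2 : (0 : ℝ) < (d : ℝ) ^ ((t : ℝ) * (1 - γ)) := Real.rpow_pos_of_pos hdpos _
  have hδpos : (0 : ℝ) < δ := by linarith
  have step1 : (F.card : ℝ) / N ≤ ((C : ℝ) * τ ^ t)⁻¹ := by
    rw [div_le_iff₀ (by exact_mod_cast hN), inv_mul_eq_div, le_div_iff₀ (by positivity)]
    calc (F.card : ℝ) * ((C:ℝ) * τ ^ t) = ((F.card : ℝ) * τ ^ t) * C := by ring
      _ ≤ ((N : ℝ) / (C : ℝ)) * C := by
          apply mul_le_mul_of_nonneg_right markov hCpos.le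
      _ = (N : ℝ) := by field_simp
  have step2 : ((C : ℝ) * τ ^ t)⁻¹ ≤ δ⁻¹ ^ t * (d : ℝ) ^ (-(t : ℝ) * (1 - γ)) := by
    have e3 : δ⁻¹ ^ t * (d : ℝ) ^ (-(t : ℝ) * (1 - γ))
        = (δ ^ t * (d : ℝ) ^ ((t : ℝ) * (1 - γ)))⁻¹ := by
      rw [mul_inv, ← inv_pow, neg_mul, Real.rpow_neg hdpos.le]
    rw [e3]
    apply inv_anti₀ (by positivity) hkey
  exact step1.trans step2

/-- Tail bound for designs: if `x` is a unit vector and `a` is drawn uniformly from a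
`t`-design (`t ≥ 1`), then for every `γ ≤ 1` and `δ ≥ 1`,
`Pr[|⟨a,x⟩|² ≥ (δ+1)·t·d^{−γ}] ≤ δ^{−t} d^{−t(1−γ)}`; in particular (`δ = 4`),
`Pr[|⟨a,x⟩|² ≥ 5t·d^{−γ}] ≤ 4^{−t} d^{−t(1−γ)}`. -/
theorem stmt4 {d N t : ℕ} (hd : 0 < d) (hN : 0 < N) (ht : 1 ≤ t)
    (w : Fin N → Fin d → ℂ) (hw : IsTDesign w t)
    (x : Fin d → ℂ) (hx : ∑ j, ‖x j‖ ^ 2 = 1)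
    (γ : ℝ) (hγ : γ ≤ 1) (δ : ℝ) (hδ : 1 ≤ δ) :
    (((univ.filter fun i =>
          (δ + 1) * t * (d : ℝ) ^ (-γ) ≤ ‖∑ j, (starRingEnd ℂ) (w i j) * x j‖ ^ 2).card : ℝ) / N
        ≤ δ⁻¹ ^ t * (d : ℝ) ^ (-(t : ℝ) * (1 - γ))) ∧
    (((univ.filter fun i =>
          5 * t * (d : ℝ) ^ (-γ) ≤ ‖∑ j, (starRingEnd ℂ) (w i j) * x j‖ ^ 2).card : ℝ) / N
        ≤ (4 : ℝ)⁻¹ ^ t * (d : ℝ) ^ (-(t : ℝ) * (1 - γ))) := by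
  refine ⟨tail_bound hd hN ht w hw x hx γ hγ δ hδ, ?_⟩
  have h4 := tail_bound hd hN ht w hw x hx γ hγ 4 (by norm_num)
  have e : (4 : ℝ) + 1 = 5 := by norm_num
  rw [e] at h4
  exact h4
end

section
/- Let X ∈ H^d with tr(X) = 1 and X = xx* rank one, and suppose Δ ∈ H^d satisfies: (i) the injectivity bound ||Δ_T||_2 ≤ 2d·||Δ_T^⊥||_2, and (ii) there exists Y ∈ H^d with (Y,Δ) = 0, ||Y_T − X||_2 ≤ 1/(4d), and ||Y_T^⊥||_∞ ≤ 1/2, where Δ_T = P_T(Δ), Δ_T^⊥ = Δ − Δ_T. Then tr(Δ_T) + ||Δ_T^⊥||_1 ≥ 0, with strict inequality if ||Δ_T||_2 < 2d·||Δ_T^⊥||_2 strictly and Δ_T^⊥ ≠ 0. -/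
open Matrix BigOperators ComplexOrder

/-- The trace norm `‖M‖₁ = tr √(Mᴴ M)`. -/
noncomputable def tnorm {d : ℕ} (M : Matrix (Fin d) (Fin d) ℂ) : ℝ :=
  (((Matrix.posSemidef_conjTranspose_mul_self M).1.eigenvectorUnitary.1 *
      diagonal (((↑) : ℝ → ℂ) ∘ (√·) ∘ (Matrix.posSemidef_conjTranspose_mul_self M).1.eigenvalues) *
      (star (Matrix.posSemidef_conjTranspose_mul_self M).1.eigenvectorUnitary :
        Matrix (Fin d) (Fin d) ℂ)).trace).re

/-- The Frobenius norm `‖M‖₂ = √tr(Mᴴ M)`. -/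
noncomputable def fnorm {d : ℕ} (M : Matrix (Fin d) (Fin d) ℂ) : ℝ :=
  Real.sqrt (((Mᴴ * M).trace).re)

/-- The operator norm of a matrix, acting on Euclidean space `ℂ^d`. -/
noncomputable def onorm {d : ℕ} (M : Matrix (Fin d) (Fin d) ℂ) : ℝ :=
  ‖Matrix.toEuclideanCLM (𝕜 := ℂ) M‖

/-- `P_T(Z) = XZ + ZX − tr(XZ)·X`. -/
noncomputable def PT {d : ℕ} (X Z : Matrix (Fin d) (Fin d) ℂ) : Matrix (Fin d) (Fin d) ℂ :=
  X * Z + Z * X - (X * Z).trace • X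

/-! Split `Y` and `Δ` along `T ⊕ T^⊥`. Since `P_T` is idempotent and self-adjoint for the trace
pairing and fixes `X`, the cross terms of `(Y, Δ)` vanish and
`0 = (Y_T − X, Δ_T) + tr Δ_T + (Y_T^⊥, Δ_T^⊥)`. Cauchy–Schwarz, the injectivity bound and
`‖·‖₂ ≤ ‖·‖₁` bound the first term by `½‖Δ_T^⊥‖₁`, and Hölder bounds the last one by `½‖Δ_T^⊥‖₁`. -/

open scoped InnerProductSpace

namespace Matrix

section

variable {𝕜 n : Type*} [RCLike 𝕜]

lemma isHermitian_vecMulVec_star (x : n → 𝕜) : (vecMulVec x (star x)).IsHermitian := by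
  rw [IsHermitian, conjTranspose_vecMulVec, star_star]

variable [Fintype n]

lemma trace_conjTranspose_mul_eq_inner {m : Type*} [Fintype m] (A B : Matrix m n 𝕜) :
    (Aᴴ * B).trace = ⟪WithLp.toLp 2 (Function.uncurry A), WithLp.toLp 2 (Function.uncurry B)⟫_𝕜 := by
  simp only [trace, diag_apply, mul_apply, conjTranspose_apply, RCLike.star_def, mul_comm,
    PiLp.inner_apply, RCLike.inner_apply, Fintype.sum_prod_type]
  exact Finset.sum_comm

lemma trace_vecMulVec_star (x : n → 𝕜) :
    (vecMulVec x (star x)).trace = ((∑ i, ‖x i‖ ^ 2 : ℝ) : 𝕜) := by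
  simp [dotProduct, RCLike.mul_conj]

lemma vecMulVec_mul_mul_vecMulVec {R : Type*} [CommRing R] (x y : n → R) (Z : Matrix n n R) :
    vecMulVec x y * Z * vecMulVec x y = (vecMulVec x y * Z).trace • vecMulVec x y := by
  rw [vecMulVec_mul, vecMulVec_mul_vecMulVec, trace_vecMulVec, vecMulVec_smul, dotProduct_comm]

variable [DecidableEq n]

lemma trace_eq_sum_inner_toEuclideanCLM (M : Matrix n n 𝕜)
    (b : OrthonormalBasis n 𝕜 (EuclideanSpace 𝕜 n)) :
    M.trace = ∑ i, ⟪b i, toEuclideanCLM (𝕜 := 𝕜) M (b i)⟫_𝕜 := by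
  refine Eq.trans ?_ (LinearMap.trace_eq_sum_inner (toEuclideanLin M) b)
  rw [LinearMap.trace_eq_matrix_trace 𝕜 (EuclideanSpace.basisFun n 𝕜).toBasis]
  congr 1
  ext i j
  simp [LinearMap.toMatrix_apply]

namespace IsHermitian

variable {B : Matrix n n 𝕜}

lemma trace_cfc (hB : B.IsHermitian) (f : ℝ → ℝ) :
    (hB.cfc f).trace = ∑ i, (f (hB.eigenvalues i) : 𝕜) := by
  rw [IsHermitian.cfc, Unitary.conjStarAlgAut_apply, trace_mul_cycle,
    Unitary.coe_star_mul_self, one_mul, trace_diagonal]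
  rfl

lemma toEuclideanCLM_eigenvectorBasis (hB : B.IsHermitian) (i : n) :
    toEuclideanCLM (𝕜 := 𝕜) B (hB.eigenvectorBasis i) =
      (hB.eigenvalues i : 𝕜) • hB.eigenvectorBasis i := by
  apply WithLp.ofLp_injective
  rw [ofLp_toEuclideanCLM, hB.mulVec_eigenvectorBasis, WithLp.ofLp_smul,
    RCLike.real_smul_eq_coe_smul (K := 𝕜)]

lemma trace_mul_eq_sum_eigenvalues_mul_inner (hB : B.IsHermitian) (A : Matrix n n 𝕜) :
    (A * B).trace = ∑ i, (hB.eigenvalues i : 𝕜) *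
      ⟪hB.eigenvectorBasis i, toEuclideanCLM (𝕜 := 𝕜) A (hB.eigenvectorBasis i)⟫_𝕜 := by
  rw [trace_eq_sum_inner_toEuclideanCLM _ hB.eigenvectorBasis]
  refine Finset.sum_congr rfl fun i _ => ?_
  rw [map_mul, mul_apply_eq_comp, hB.toEuclideanCLM_eigenvectorBasis, map_smul,
    inner_smul_right]

end IsHermitian

end

end Matrix

section Norms

variable {d : ℕ}

lemma tnorm_eq_re_trace_cfc_sqrt (M : Matrix (Fin d) (Fin d) ℂ) :
    tnorm M = (cfc Real.sqrt (Mᴴ * M)).trace.re := by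
  rw [(posSemidef_conjTranspose_mul_self M).1.cfc_eq, IsHermitian.cfc,
    Unitary.conjStarAlgAut_apply]
  rfl

lemma tnorm_eq_sum_abs_eigenvalues {B : Matrix (Fin d) (Fin d) ℂ} (hB : B.IsHermitian) :
    tnorm B = ∑ i, |hB.eigenvalues i| := by
  have hsqrt : cfc Real.sqrt (Bᴴ * B) = cfc (fun t : ℝ => |t|) B := by
    rw [hB.eq, ← sq, ← cfc_comp_pow Real.sqrt 2 B]
    simp only [Real.sqrt_sq_eq_abs]
  rw [tnorm_eq_re_trace_cfc_sqrt, hsqrt, hB.cfc_eq, hB.trace_cfc, Complex.re_sum]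
  rfl

lemma tnorm_nonneg {B : Matrix (Fin d) (Fin d) ℂ} (hB : B.IsHermitian) : 0 ≤ tnorm B := by
  rw [tnorm_eq_sum_abs_eigenvalues hB]
  positivity

lemma fnorm_nonneg (A : Matrix (Fin d) (Fin d) ℂ) : 0 ≤ fnorm A := Real.sqrt_nonneg _

lemma fnorm_eq_sqrt_sum_sq_eigenvalues {B : Matrix (Fin d) (Fin d) ℂ} (hB : B.IsHermitian) :
    fnorm B = √(∑ i, hB.eigenvalues i ^ 2) := by
  have hinner (i : Fin d) :
      ⟪hB.eigenvectorBasis i, toEuclideanCLM (𝕜 := ℂ) B (hB.eigenvectorBasis i)⟫_ℂ =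
        hB.eigenvalues i := by
    rw [hB.toEuclideanCLM_eigenvectorBasis, inner_smul_right, inner_self_eq_one_of_norm_eq_one
      (hB.eigenvectorBasis.orthonormal.1 i), mul_one]
    rfl
  rw [fnorm, hB.eq, hB.trace_mul_eq_sum_eigenvalues_mul_inner, Complex.re_sum]
  simp [hinner, sq]

lemma fnorm_le_tnorm {B : Matrix (Fin d) (Fin d) ℂ} (hB : B.IsHermitian) : fnorm B ≤ tnorm B := by
  rw [fnorm_eq_sqrt_sum_sq_eigenvalues hB, tnorm_eq_sum_abs_eigenvalues hB,
    Real.sqrt_le_left (by positivity)]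
  simpa only [sq_abs] using
    Finset.sum_sq_le_sq_sum_of_nonneg (s := .univ) fun i _ => abs_nonneg (hB.eigenvalues i)

lemma fnorm_eq_norm_toLp_uncurry (A : Matrix (Fin d) (Fin d) ℂ) :
    fnorm A = ‖WithLp.toLp 2 (Function.uncurry A)‖ := by
  rw [fnorm, trace_conjTranspose_mul_eq_inner, norm_eq_sqrt_re_inner (𝕜 := ℂ)]
  rfl

lemma fnorm_conjTranspose (A : Matrix (Fin d) (Fin d) ℂ) : fnorm Aᴴ = fnorm A := by
  rw [fnorm, fnorm, conjTranspose_conjTranspose, trace_mul_comm]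

lemma norm_trace_mul_le_fnorm_mul_fnorm (A B : Matrix (Fin d) (Fin d) ℂ) :
    ‖(A * B).trace‖ ≤ fnorm A * fnorm B := by
  have := norm_inner_le_norm (𝕜 := ℂ) (WithLp.toLp 2 (Function.uncurry Aᴴ))
    (WithLp.toLp 2 (Function.uncurry B))
  rwa [← trace_conjTranspose_mul_eq_inner, conjTranspose_conjTranspose,
    ← fnorm_eq_norm_toLp_uncurry, ← fnorm_eq_norm_toLp_uncurry, fnorm_conjTranspose] at this

lemma norm_trace_mul_le_onorm_mul_tnorm (A : Matrix (Fin d) (Fin d) ℂ)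
    {B : Matrix (Fin d) (Fin d) ℂ} (hB : B.IsHermitian) : ‖(A * B).trace‖ ≤ onorm A * tnorm B := by
  rw [hB.trace_mul_eq_sum_eigenvalues_mul_inner, tnorm_eq_sum_abs_eigenvalues hB, Finset.mul_sum]
  refine (norm_sum_le _ _).trans (Finset.sum_le_sum fun i _ => ?_)
  set v := hB.eigenvectorBasis i
  have hv : ‖v‖ = 1 := hB.eigenvectorBasis.orthonormal.1 i
  calc ‖(hB.eigenvalues i : ℂ) * ⟪v, toEuclideanCLM (𝕜 := ℂ) A v⟫_ℂ‖
      ≤ |hB.eigenvalues i| * (‖v‖ * (onorm A * ‖v‖)) := by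
        rw [norm_mul, Complex.norm_real, Real.norm_eq_abs]
        gcongr
        exact (norm_inner_le_norm _ _).trans (by gcongr; exact ContinuousLinearMap.le_opNorm _ _)
    _ = onorm A * |hB.eigenvalues i| := by rw [hv]; ring

end Norms

section TangentProjection

variable {d : ℕ} {X : Matrix (Fin d) (Fin d) ℂ}

lemma PT_sub (A B : Matrix (Fin d) (Fin d) ℂ) : PT X (A - B) = PT X A - PT X B := by
  simp only [PT, mul_sub, sub_mul, trace_sub, sub_smul]
  abel

lemma trace_PT_mul (A B : Matrix (Fin d) (Fin d) ℂ) :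
    (PT X A * B).trace = (A * PT X B).trace := by
  simp only [PT, sub_mul, add_mul, mul_sub, mul_add, Matrix.smul_mul, Matrix.mul_smul, trace_sub,
    trace_add, trace_smul, smul_eq_mul]
  rw [Matrix.mul_assoc X A B, Matrix.mul_assoc A X B, trace_mul_comm X (A * B),
    Matrix.mul_assoc A B X, trace_mul_comm X A]
  ring

lemma isHermitian_PT (hX : X.IsHermitian) {Z : Matrix (Fin d) (Fin d) ℂ} (hZ : Z.IsHermitian) :
    (PT X Z).IsHermitian := by
  have htr : star (X * Z).trace = (X * Z).trace := by
    rw [← trace_conjTranspose, conjTranspose_mul, hX.eq, hZ.eq, trace_mul_comm]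
  rw [IsHermitian, PT, conjTranspose_sub, conjTranspose_add, conjTranspose_mul, conjTranspose_mul,
    conjTranspose_smul, hX.eq, hZ.eq, htr]
  abel

-- The two properties of `X = xx*`, `‖x‖ = 1`, on which the algebra of `P_T` rests.
variable (htX : X.trace = 1) (hXZX : ∀ Z, X * Z * X = (X * Z).trace • X)
include htX

lemma trace_PT (Z : Matrix (Fin d) (Fin d) ℂ) : (PT X Z).trace = (X * Z).trace := by
  rw [PT, trace_sub, trace_add, trace_smul, trace_mul_comm Z X, htX, smul_eq_mul, mul_one,
    add_sub_cancel_right]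

include hXZX

lemma mul_self_eq_self_of_trace_eq_one : X * X = X := by
  simpa [htX] using hXZX 1

lemma PT_self : PT X X = X := by
  rw [PT, mul_self_eq_self_of_trace_eq_one htX hXZX, htX, one_smul, add_sub_cancel_right]

lemma PT_PT (Z : Matrix (Fin d) (Fin d) ℂ) : PT X (PT X Z) = PT X Z := by
  have hXX := mul_self_eq_self_of_trace_eq_one htX hXZX
  have hleft : X * PT X Z = X * Z := by
    simp only [PT, mul_add, mul_sub, Matrix.mul_smul, ← Matrix.mul_assoc, hXX, hXZX,
      add_sub_cancel_right]
  have hright : PT X Z * X = Z * X := by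
    simp only [PT, add_mul, sub_mul, Matrix.smul_mul, hXZX, Matrix.mul_assoc Z X X, hXX,
      add_sub_cancel_left]
  rw [PT, hleft, hright, PT]

lemma PT_sub_PT (Z : Matrix (Fin d) (Fin d) ℂ) : PT X (Z - PT X Z) = 0 := by
  rw [PT_sub, PT_PT htX hXZX, sub_self]

lemma trace_mul_eq_tangent_decomposition (Y Δ : Matrix (Fin d) (Fin d) ℂ) :
    (Y * Δ).trace = ((PT X Y - X) * PT X Δ).trace + (PT X Δ).trace
      + ((Y - PT X Y) * (Δ - PT X Δ)).trace := by
  have hTperp : (PT X Y * (Δ - PT X Δ)).trace = 0 := by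
    rw [trace_PT_mul, PT_sub_PT htX hXZX, mul_zero, trace_zero]
  have hperpT : ((Y - PT X Y) * PT X Δ).trace = 0 := by
    rw [trace_mul_comm, trace_PT_mul, PT_sub_PT htX hXZX, mul_zero, trace_zero]
  have hXT : (X * PT X Δ).trace = (PT X Δ).trace := by
    rw [← trace_PT_mul, PT_self htX hXZX, trace_PT htX]
  have hsplit : Y * Δ = PT X Y * PT X Δ + PT X Y * (Δ - PT X Δ)
      + (Y - PT X Y) * PT X Δ + (Y - PT X Y) * (Δ - PT X Δ) := by noncomm_ring
  rw [hsplit, trace_add, trace_add, trace_add, hTperp, hperpT, sub_mul (PT X Y) X, trace_sub, hXT]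
  ring

end TangentProjection

lemma mul_le_half_of_le_one_div_four_mul {d e F G : ℝ} (hd : 0 ≤ d) (hF : 0 ≤ F) (hG : 0 ≤ G)
    (hed : e ≤ 1 / (4 * d)) (hFG : F ≤ 2 * d * G) : e * F ≤ G / 2 := by
  rcases hd.eq_or_lt with rfl | hd
  · rw [le_antisymm (by simpa using hFG) hF, mul_zero]
    positivity
  · calc e * F ≤ 1 / (4 * d) * (2 * d * G) := by gcongr
      _ = G / 2 := by field_simp; ring

lemma mul_lt_half_of_le_one_div_four_mul {d e F G : ℝ} (hd : 0 < d) (hF : 0 ≤ F)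
    (hed : e ≤ 1 / (4 * d)) (hFG : F < 2 * d * G) : e * F < G / 2 := by
  calc e * F ≤ 1 / (4 * d) * F := by gcongr
    _ < 1 / (4 * d) * (2 * d * G) := by gcongr
    _ = G / 2 := by field_simp; ring

theorem stmt11_general {d : ℕ} (x : Fin d → ℂ) (hx : ∑ j, ‖x j‖ ^ 2 = 1)
    (X : Matrix (Fin d) (Fin d) ℂ) (hX : X = Matrix.vecMulVec x (star x))
    (Δ Y : Matrix (Fin d) (Fin d) ℂ) (hΔ : Δ.IsHermitian)
    (h1 : fnorm (PT X Δ) ≤ 2 * d * fnorm (Δ - PT X Δ))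
    (horth : (Y * Δ).trace = 0)
    (h2 : fnorm (PT X Y - X) ≤ 1 / (4 * d))
    (h3 : onorm (Y - PT X Y) ≤ 1 / 2) :
    0 ≤ ((PT X Δ).trace).re + tnorm (Δ - PT X Δ) ∧
    ((fnorm (PT X Δ) < 2 * d * fnorm (Δ - PT X Δ) ∧ Δ - PT X Δ ≠ 0) →
      0 < ((PT X Δ).trace).re + tnorm (Δ - PT X Δ)) := by
  have htX : X.trace = 1 := by rw [hX, trace_vecMulVec_star, hx, RCLike.ofReal_one]
  have hXZX : ∀ Z, X * Z * X = (X * Z).trace • X := hX ▸ vecMulVec_mul_mul_vecMulVec x (star x)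
  have hperp : (Δ - PT X Δ).IsHermitian :=
    hΔ.sub (isHermitian_PT (hX ▸ isHermitian_vecMulVec_star x) hΔ)
  have hsplit := congrArg Complex.re (trace_mul_eq_tangent_decomposition htX hXZX Y Δ)
  simp only [horth, Complex.zero_re, Complex.add_re] at hsplit
  have hT := abs_le.mp <| (Complex.abs_re_le_norm _).trans
    (norm_trace_mul_le_fnorm_mul_fnorm (PT X Y - X) (PT X Δ))
  have hperpY := abs_le.mp <| (Complex.abs_re_le_norm _).trans
    (norm_trace_mul_le_onorm_mul_tnorm (Y - PT X Y) hperp)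
  have hhalf : onorm (Y - PT X Y) * tnorm (Δ - PT X Δ) ≤ tnorm (Δ - PT X Δ) / 2 := by
    linarith [mul_le_mul_of_nonneg_right h3 (tnorm_nonneg hperp)]
  have hft := fnorm_le_tnorm hperp
  refine ⟨?_, fun ⟨hlt, hne⟩ => ?_⟩
  · have := mul_le_half_of_le_one_div_four_mul (Nat.cast_nonneg d) (fnorm_nonneg _)
      (fnorm_nonneg _) h2 h1
    linarith [hT.1, hperpY.1]
  · have hd : 0 < d := Nat.pos_of_ne_zero fun hd => hne (by subst hd; exact Subsingleton.elim _ _)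
    have := mul_lt_half_of_le_one_div_four_mul (Nat.cast_pos.mpr hd) (fnorm_nonneg _) h2 hlt
    linarith [hT.1, hperpY.1]

/-- Optimality of `X = xx*`: if `Δ` is Hermitian with `‖Δ_T‖₂ ≤ 2d·‖Δ_T^⊥‖₂`, and there is a
Hermitian `Y` with `(Y,Δ) = 0`, `‖Y_T − X‖₂ ≤ 1/(4d)` and `‖Y_T^⊥‖_∞ ≤ 1/2`, then
`tr(Δ_T) + ‖Δ_T^⊥‖₁ ≥ 0`, strictly if `‖Δ_T‖₂ < 2d·‖Δ_T^⊥‖₂` strictly and `Δ_T^⊥ ≠ 0`. -/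
theorem stmt11 {d : ℕ} (x : Fin d → ℂ) (hx : ∑ j, ‖x j‖ ^ 2 = 1)
    (X : Matrix (Fin d) (Fin d) ℂ) (hX : X = Matrix.vecMulVec x (star x))
    (Δ Y : Matrix (Fin d) (Fin d) ℂ) (hΔ : Δ.IsHermitian) (hY : Y.IsHermitian)
    (h1 : fnorm (PT X Δ) ≤ 2 * d * fnorm (Δ - PT X Δ))
    (horth : (Y * Δ).trace = 0)
    (h2 : fnorm (PT X Y - X) ≤ 1 / (4 * d))
    (h3 : onorm (Y - PT X Y) ≤ 1 / 2) :
    0 ≤ ((PT X Δ).trace).re + tnorm (Δ - PT X Δ) ∧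
    ((fnorm (PT X Δ) < 2 * d * fnorm (Δ - PT X Δ) ∧ Δ - PT X Δ ≠ 0) →
      0 < ((PT X Δ).trace).re + tnorm (Δ - PT X Δ)) :=
  stmt11_general x hx X hX Δ Y hΔ h1 horth h2 h3
end
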